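/- arXiv:2208.05478 — 2 statements merged into one kernel-verified Lean document; each statement's English description precedes it below -/
import Mathlib

section
/- Let G be a group, let 1 ≤ p < ∞, and let d : ℂ[G] → ℓ^p(G) be a derivation (with respect to the convolution bimodule structure) which is bounded from the supremum norm on ℂ[G] to the ℓ^p norm, i.e. there exists M such that ‖d x‖_p ≤ M·‖x‖_s for all x ∈ ℂ[G]. Then d is quasi-inner: (d δ_t)(g·t) = 0 for all g, t ∈ G with g·t = t·g. -/
/-- Left action of the group ring `ℂ[G]` on functions `G → ℂ` by convolution. -/
noncomputable def convL (G : Type*) [Group G] (x : MonoidAlgebra ℂ G) (f : G → ℂ) : G → ℂ :=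
  fun u => ∑ g ∈ x.coeff.support, x.coeff g * f (g⁻¹ * u)

/-- Right action of the group ring `ℂ[G]` on functions `G → ℂ` by convolution. -/
noncomputable def convR (G : Type*) [Group G] (f : G → ℂ) (x : MonoidAlgebra ℂ G) : G → ℂ :=
  fun u => ∑ g ∈ x.coeff.support, f (u * g⁻¹) * x.coeff g

/-- The supremum norm on the group ring `ℂ[G]`. -/
noncomputable def supNorm {G : Type*} [Group G] (x : MonoidAlgebra ℂ G) : ℝ :=
  ⨆ g, ‖x.coeff g‖

/-- The `ℓ^p` norm of a function `f : G → ℂ`. -/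
noncomputable def lpNorm {G : Type*} (p : ℝ) (f : G → ℂ) : ℝ :=
  (∑' g : G, ‖f g‖ ^ p) ^ (1 / p)

/-!
If `g` commutes with `t`, the Leibniz rule gives `(d δ_{tⁿ})(g tⁿ) = n · (d δ_t)(g t)`.
Since `‖δ_{tⁿ}‖_s = 1` and a single value of a function is bounded by its `ℓ^p` norm,
boundedness of `d` forces `n · |(d δ_t)(g t)| ≤ M` for every `n`, so `(d δ_t)(g t) = 0`.
-/

open MonoidAlgebra

section Convolution

variable {G : Type*} [Group G]

lemma convL_single (a : G) (r : ℂ) (f : G → ℂ) (u : G) :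
    convL G (single a r) f u = r * f (a⁻¹ * u) := by
  rcases eq_or_ne r 0 with rfl | hr <;> simp [convL, *]

lemma convR_single (f : G → ℂ) (a : G) (r : ℂ) (u : G) :
    convR G f (single a r) u = f (u * a⁻¹) * r := by
  rcases eq_or_ne r 0 with rfl | hr <;> simp [convR, *]

lemma supNorm_single (a : G) (r : ℂ) : supNorm (single a r) = ‖r‖ := by
  have hle : ∀ g, ‖(single a r).coeff g‖ ≤ ‖r‖ := fun g => by
    rcases eq_or_ne a g with rfl | h <;> simp [*]
  refine le_antisymm (ciSup_le hle) ?_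
  exact le_ciSup_of_le ⟨‖r‖, Set.forall_mem_range.2 hle⟩ a (by simp)

end Convolution

lemma norm_le_lpNorm {α : Type*} {p : ℝ} (hp : 0 < p) {f : α → ℂ}
    (hf : Summable fun a => ‖f a‖ ^ p) (a : α) : ‖f a‖ ≤ lpNorm p f := by
  have h := Real.rpow_le_rpow (by positivity) (hf.le_tsum a fun _ _ => by positivity)
    (one_div_nonneg.2 hp.le)
  rwa [← Real.rpow_mul (norm_nonneg _), mul_one_div_cancel hp.ne', Real.rpow_one] at h

section Derivation

variable {G : Type*} [Group G] {d : MonoidAlgebra ℂ G → G → ℂ}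

lemma map_one_eq_zero_of_leibniz
    (hder : ∀ x y, d (x * y) = convR G (d x) y + convL G x (d y)) : d 1 = 0 := by
  have h := hder 1 1
  have hL : convL G 1 (d 1) = d 1 := funext fun u => by simp [one_def, convL_single]
  have hR : convR G (d 1) 1 = d 1 := funext fun u => by simp [one_def, convR_single]
  rw [one_mul, hL, hR] at h
  exact add_eq_right.mp h.symm

lemma apply_single_pow_mul_of_commute
    (hder : ∀ x y, d (x * y) = convR G (d x) y + convL G x (d y)) {g t : G}
    (hgt : Commute g t) (n : ℕ) :
    d (single (t ^ n) 1) (g * t ^ n) = n * d (single t 1) (g * t) := by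
  induction n with
  | zero => simp [← one_def, map_one_eq_zero_of_leibniz hder]
  | succ n ih =>
    have hmul : single (t ^ (n + 1)) (1 : ℂ) = single (t ^ n) 1 * single t 1 := by
      rw [single_mul_single, one_mul, pow_succ]
    have hleft : g * t ^ (n + 1) * t⁻¹ = g * t ^ n := by group
    have hright : (t ^ n)⁻¹ * (g * t ^ (n + 1)) = g * t := by
      rw [pow_succ, ← mul_assoc g, (hgt.pow_right n).eq]; group
    rw [hmul, hder, Pi.add_apply, convR_single, convL_single, hleft, hright, ih]
    push_cast
    ring

end Derivation

lemma eq_zero_of_forall_nat_mul_norm_le {c : ℂ} {M : ℝ} (h : ∀ n : ℕ, n * ‖c‖ ≤ M) :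
    c = 0 := by
  by_contra hc
  have hpos : 0 < ‖c‖ := norm_pos_iff.2 hc
  obtain ⟨n, hn⟩ := exists_nat_gt (M / ‖c‖)
  exact (h n).not_gt ((div_lt_iff₀ hpos).1 hn)

/-- For `1 ≤ p < ∞`, every derivation `d : ℂ[G] → ℓ^p(G)` which is bounded from the
supremum norm to the `ℓ^p` norm is quasi-inner: `(d δ_t)(g*t) = 0` whenever
`g*t = t*g`. -/
theorem derivation_into_lp_quasiInner
    (G : Type*) [Group G] (p : ℝ) (hp : 1 ≤ p)
    (d : MonoidAlgebra ℂ G →ₗ[ℂ] (G → ℂ))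
    -- d takes values in ℓ^p(G)
    (hmem : ∀ x : MonoidAlgebra ℂ G, Summable (fun g : G => ‖d x g‖ ^ p))
    -- d is a derivation
    (hder : ∀ x y : MonoidAlgebra ℂ G, d (x * y) = convR G (d x) y + convL G x (d y))
    -- d is bounded from the supremum norm to the ℓ^p norm
    (M : ℝ) (hbdd : ∀ x : MonoidAlgebra ℂ G, lpNorm p (d x) ≤ M * supNorm x) :
    ∀ g t : G, g * t = t * g → d (MonoidAlgebra.single t (1 : ℂ)) (g * t) = 0 := by
  intro g t hgt
  refine eq_zero_of_forall_nat_mul_norm_le (M := M) fun n => ?_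
  calc (n : ℝ) * ‖d (single t 1) (g * t)‖
      = ‖d (single (t ^ n) 1) (g * t ^ n)‖ := by
        rw [apply_single_pow_mul_of_commute hder hgt, norm_mul, Complex.norm_natCast]
    _ ≤ lpNorm p (d (single (t ^ n) 1)) := norm_le_lpNorm (by linarith) (hmem _) _
    _ ≤ M := by simpa [supNorm_single] using hbdd (single (t ^ n) 1)
end

section
/- Let G be a group, let σ, τ : G → G be group homomorphisms (extended to algebra endomorphisms of ℂ[G]), let A be a sub-ℂ[G]-bimodule of the convolution bimodule of functions G → ℂ with A ⊆ ℓ^∞(G), let N be a norm on A with sup_{u∈G} |a(u)| ≤ C·N(a) for all a ∈ A and some constant C > 0. If d : ℂ[G] → A is a (σ,τ)-derivation which is bounded from the supremum norm to N (there exists M with N(d x) ≤ M·‖x‖_s for all x ∈ ℂ[G]), then d is (σ,τ)-quasi-inner: (d δ_t)(g·σ(t)) = 0 for all g, t ∈ G with τ(t)·g = g·σ(t). -/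
/-- The extension of a group homomorphism `σ : G → G` to an algebra endomorphism of
`ℂ[G]`, determined by `σ(δ_g) = δ_{σ g}`. -/
noncomputable def extendHom {G : Type*} [Group G] (σ : G →* G) :
    MonoidAlgebra ℂ G → MonoidAlgebra ℂ G :=
  fun x => MonoidAlgebra.ofCoeff (Finsupp.mapDomain σ x.coeff)

/-
Along a twisted loop `τ t * g = g * σ t` the derivation law gives
`(d δ_{tⁿ})(g * σ(t)ⁿ) = n · (d δ_t)(g * σ t)`: each further factor `δ_t` contributes one more
copy of `(d δ_t)(g * σ t)`, because the loop relation moves the point `g * σ(t)ⁿ` back to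
`g * σ t`. The left side is at most `C · N(d δ_{tⁿ}) ≤ C · M · ‖δ_{tⁿ}‖_s = C · M` in modulus,
uniformly in `n`, so `(d δ_t)(g * σ t)` must vanish.
-/

open MonoidAlgebra

section GroupRing

variable {G : Type*} [Group G]

lemma convR_single_one (f : G → ℂ) (s u : G) : convR G f (single s 1) u = f (u * s⁻¹) := by
  simp [convR, coeff_single]

lemma convL_single_one (f : G → ℂ) (s u : G) : convL G (single s 1) f u = f (s⁻¹ * u) := by
  simp [convL, coeff_single]

lemma extendHom_single_one (σ : G →* G) (s : G) :
    extendHom σ (single s (1 : ℂ)) = single (σ s) 1 := by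
  rw [extendHom, coeff_single, Finsupp.mapDomain_single, ofCoeff_single]

lemma supNorm_single_one (s : G) : supNorm (single s (1 : ℂ)) = 1 := by
  classical
  unfold supNorm
  have hle : ∀ u, ‖(single s (1 : ℂ)).coeff u‖ ≤ 1 := fun u => by
    rw [coeff_single, Finsupp.single_apply]
    split_ifs <;> simp
  refine le_antisymm (ciSup_le hle) ?_
  simpa [coeff_single] using le_ciSup (f := fun u => ‖(single s (1 : ℂ)).coeff u‖)
    ⟨1, Set.forall_mem_range.2 hle⟩ s

end GroupRing

def IsTwistedDerivation {G : Type*} [Group G] (σ τ : G →* G)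
    (d : MonoidAlgebra ℂ G → G → ℂ) : Prop :=
  ∀ x y, d (x * y) = convR G (d x) (extendHom σ y) + convL G (extendHom τ x) (d y)

namespace IsTwistedDerivation

variable {G : Type*} [Group G] {σ τ : G →* G} {d : MonoidAlgebra ℂ G → G → ℂ}

lemma apply_single_mul_single (hd : IsTwistedDerivation σ τ d) (s t u : G) :
    d (single s 1 * single t 1) u =
      d (single s 1) (u * (σ t)⁻¹) + d (single t 1) ((τ s)⁻¹ * u) := by
  rw [hd, Pi.add_apply, extendHom_single_one, extendHom_single_one, convR_single_one,
    convL_single_one]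

lemma map_one (hd : IsTwistedDerivation σ τ d) : d 1 = 0 := by
  funext u
  have h := hd.apply_single_mul_single 1 1 u
  simp only [mul_one, ← one_def, _root_.map_one, inv_one, one_mul] at h
  simpa using h

lemma apply_single_pow_of_twistedLoop (hd : IsTwistedDerivation σ τ d) {g t : G}
    (hloop : τ t * g = g * σ t) (n : ℕ) :
    d (single (t ^ n) 1) (g * σ t ^ n) = n * d (single t 1) (g * σ t) := by
  induction n with
  | zero => simp [← one_def, hd.map_one]
  | succ n ih =>
    have hloop_pow : g * σ t ^ n = τ t ^ n * g := (SemiconjBy.pow_right hloop.symm n).eq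
    have hleft : g * σ t ^ (n + 1) * (σ t)⁻¹ = g * σ t ^ n := by group
    have hright : (τ (t ^ n))⁻¹ * (g * σ t ^ (n + 1)) = g * σ t := by
      rw [map_pow, pow_succ, ← mul_assoc g, hloop_pow]
      group
    have hsplit : single (t ^ (n + 1)) (1 : ℂ) = single (t ^ n) 1 * single t 1 := by
      rw [single_mul_single, one_mul, pow_succ]
    rw [hsplit, hd.apply_single_mul_single, hleft, hright, ih]
    push_cast
    ring

end IsTwistedDerivation

lemma eq_zero_of_forall_nat_mul_norm_le_s11 {E : Type*} [NormedAddCommGroup E] {v : E} {B : ℝ}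
    (h : ∀ n : ℕ, n * ‖v‖ ≤ B) : v = 0 := by
  by_contra hv
  obtain ⟨n, hn⟩ := exists_nat_gt (B / ‖v‖)
  rw [div_lt_iff₀ (norm_pos_iff.2 hv)] at hn
  linarith [h n]

theorem sigma_tau_derivation_into_subordinate_bimodule_quasiInner_general
    (G : Type*) [Group G] (σ τ : G →* G) (A : Submodule ℂ (G → ℂ))
    -- N is a norm on A
    (N : (G → ℂ) → ℝ)
    -- N is subordinate to the supremum norm
    (C : ℝ) (hC : 0 < C)
    (hsub : ∀ a ∈ A, ∀ u : G, ‖a u‖ ≤ C * N a)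
    -- d is a (σ,τ)-derivation ℂ[G] → A
    (d : MonoidAlgebra ℂ G →ₗ[ℂ] (G → ℂ))
    (hrange : ∀ x : MonoidAlgebra ℂ G, d x ∈ A)
    (hder : ∀ x y : MonoidAlgebra ℂ G,
      d (x * y) = convR G (d x) (extendHom σ y) + convL G (extendHom τ x) (d y))
    -- d is bounded from the supremum norm to N
    (M : ℝ) (hbdd : ∀ x : MonoidAlgebra ℂ G, N (d x) ≤ M * supNorm x) :
    ∀ g t : G, τ t * g = g * σ t → d (MonoidAlgebra.single t (1 : ℂ)) (g * σ t) = 0 := by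
  intro g t hloop
  refine eq_zero_of_forall_nat_mul_norm_le_s11 (B := C * M) fun n => ?_
  have hpow := IsTwistedDerivation.apply_single_pow_of_twistedLoop hder hloop n
  calc (n : ℝ) * ‖d (single t 1) (g * σ t)‖ = ‖d (single (t ^ n) 1) (g * σ t ^ n)‖ := by
        simp [hpow]
    _ ≤ C * N (d (single (t ^ n) 1)) := hsub _ (hrange _) _
    _ ≤ C * M := by
        simpa [supNorm_single_one] using mul_le_mul_of_nonneg_left (hbdd (single (t ^ n) 1)) hC.le

/-- If `A` is a sub-`ℂ[G]`-bimodule of the convolution bimodule of functions `G → ℂ`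
with `A ⊆ ℓ^∞(G)`, `N` is a norm on `A` subordinate to the supremum norm, and
`d : ℂ[G] → A` is a `(σ,τ)`-derivation bounded from the supremum norm to `N`, then `d`
is `(σ,τ)`-quasi-inner: `(d δ_t)(g*σ(t)) = 0` whenever `τ(t)*g = g*σ(t)`. -/
theorem sigma_tau_derivation_into_subordinate_bimodule_quasiInner
    (G : Type*) [Group G] (σ τ : G →* G) (A : Submodule ℂ (G → ℂ))
    -- A is closed under the left and right ℂ[G]-actions (a sub-bimodule)
    (hAL : ∀ (x : MonoidAlgebra ℂ G) (a : G → ℂ), a ∈ A → convL G x a ∈ A)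
    (hAR : ∀ (x : MonoidAlgebra ℂ G) (a : G → ℂ), a ∈ A → convR G a x ∈ A)
    -- every element of A is a bounded function (A ⊆ ℓ^∞(G))
    (hAbdd : ∀ a ∈ A, ∃ B : ℝ, ∀ u : G, ‖a u‖ ≤ B)
    -- N is a norm on A
    (N : (G → ℂ) → ℝ)
    (hN_nonneg : ∀ a ∈ A, 0 ≤ N a)
    (hN_eq_zero : ∀ a ∈ A, (N a = 0 ↔ a = 0))
    (hN_add : ∀ a ∈ A, ∀ b ∈ A, N (a + b) ≤ N a + N b)
    (hN_smul : ∀ (c : ℂ), ∀ a ∈ A, N (c • a) = ‖c‖ * N a)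
    -- N is subordinate to the supremum norm
    (C : ℝ) (hC : 0 < C)
    (hsub : ∀ a ∈ A, ∀ u : G, ‖a u‖ ≤ C * N a)
    -- d is a (σ,τ)-derivation ℂ[G] → A
    (d : MonoidAlgebra ℂ G →ₗ[ℂ] (G → ℂ))
    (hrange : ∀ x : MonoidAlgebra ℂ G, d x ∈ A)
    (hder : ∀ x y : MonoidAlgebra ℂ G,
      d (x * y) = convR G (d x) (extendHom σ y) + convL G (extendHom τ x) (d y))
    -- d is bounded from the supremum norm to N
    (M : ℝ) (hbdd : ∀ x : MonoidAlgebra ℂ G, N (d x) ≤ M * supNorm x) :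
    ∀ g t : G, τ t * g = g * σ t → d (MonoidAlgebra.single t (1 : ℂ)) (g * σ t) = 0 :=
  sigma_tau_derivation_into_subordinate_bimodule_quasiInner_general G σ τ A N C hC hsub d hrange
    hder M hbdd
end
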